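/- arXiv:1511.01837 — 5 statements merged into one kernel-verified Lean document; each statement's English description precedes it below -/
import Mathlib

section
/- Let (Ω, μ) be a probability space. For each customer type k and each assortment S ⊆ N let I_k(S) : Ω → ℝ be a nonnegative integrable random variable, and for each k and each product n let J_{kn} : Ω → ℝ be a nonnegative integrable random variable. Assume: (a) E[∑_{S ⊆ N} I_k(S)] = Λ_k for every k; (b) E[J_{kn}] = E[∑_{S ⊆ N, n ∈ S} I_k(S) · P^k(n,S)] for every k and n; (c) almost surely, ∑_k ∑_{n : ℓ(n) = j} J_{kn} ≤ C_j for every resource j. If moreover Λ_k > 0 for every k, then the expected total reward satisfies E[∑_k ∑_n r_n · J_{kn}] ≤ V^{CDLP}. -/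
open Finset MeasureTheory

/-- CDLP feasibility: `x k S` is the probability of offering assortment `S`
to customer type `k`. -/
def CDLPFeasible {K N L : Type*} [Fintype K] [Fintype N] [Fintype L]
    [DecidableEq N] [DecidableEq L]
    (ℓ : N → L) (Λ : K → ℝ) (P : K → N → Finset N → ℝ) (C : L → ℝ)
    (x : K → Finset N → ℝ) : Prop :=
  (∀ k S, 0 ≤ x k S) ∧
  (∀ k, ∑ S : Finset N, x k S ≤ 1) ∧
  (∀ j, (∑ k, Λ k * ∑ n ∈ univ.filter (fun n => ℓ n = j),
      ∑ S ∈ univ.filter (fun S : Finset N => n ∈ S), x k S * P k n S) ≤ C j)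

/-- CDLP objective: expected total reward under offering probabilities `x`. -/
noncomputable def CDLPObj {K N : Type*} [Fintype K] [Fintype N]
    (Λ : K → ℝ) (P : K → N → Finset N → ℝ) (r : N → ℝ)
    (x : K → Finset N → ℝ) : ℝ :=
  ∑ k, ∑ S : Finset N, Λ k * x k S * ∑ n ∈ S, P k n S * r n

/-- The optimal value of the CDLP: supremum of the objective over feasible
solutions. -/
noncomputable def VCDLP {K N L : Type*} [Fintype K] [Fintype N] [Fintype L]
    [DecidableEq N] [DecidableEq L]
    (ℓ : N → L) (Λ : K → ℝ) (P : K → N → Finset N → ℝ) (C : L → ℝ)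
    (r : N → ℝ) : ℝ :=
  sSup (CDLPObj Λ P r '' {x | CDLPFeasible ℓ Λ P C x})

/-- Swapping a double sum over assortments and their members. -/
lemma sum_swap_mem {N : Type*} [Fintype N] [DecidableEq N]
    (f : N → Finset N → ℝ) :
    ∑ S : Finset N, ∑ n ∈ S, f n S
      = ∑ n, ∑ S ∈ univ.filter (fun S : Finset N => n ∈ S), f n S := by
  rw [Finset.sum_comm' (s := univ) (t := fun S => S)
      (t' := univ) (s' := fun n => univ.filter (fun S : Finset N => n ∈ S))]
  intro S n
  simp

/-- Theorem 1 of the paper: the expected total reward of any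
offline policy — expressed through its random offering counts `I k S` and
purchase counts `J k n` — is at most the CDLP value. -/
theorem offline_le_VCDLP
    {K N L : Type*} [Fintype K] [Fintype N] [Fintype L]
    [DecidableEq N] [DecidableEq L]
    {Ω : Type*} [MeasurableSpace Ω] (μ : Measure Ω) [IsProbabilityMeasure μ]
    (ℓ : N → L) (Λ : K → ℝ) (P : K → N → Finset N → ℝ) (C : L → ℝ) (r : N → ℝ)
    (hΛ : ∀ k, 0 < Λ k) (hC : ∀ j, 0 ≤ C j)
    (hP0 : ∀ k n S, 0 ≤ P k n S) (hP1 : ∀ k n S, P k n S ≤ 1)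
    (I : K → Finset N → Ω → ℝ) (J : K → N → Ω → ℝ)
    (hInn : ∀ k S ω, 0 ≤ I k S ω) (hJnn : ∀ k n ω, 0 ≤ J k n ω)
    (hIint : ∀ k S, Integrable (I k S) μ)
    (hJint : ∀ k n, Integrable (J k n) μ)
    (ha : ∀ k, (∫ ω, (∑ S : Finset N, I k S ω) ∂μ) = Λ k)
    (hb : ∀ k n, (∫ ω, J k n ω ∂μ) =
      ∫ ω, (∑ S ∈ univ.filter (fun S : Finset N => n ∈ S), I k S ω * P k n S) ∂μ)
    (hc : ∀ᵐ ω ∂μ, ∀ j,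
      (∑ k, ∑ n ∈ univ.filter (fun n => ℓ n = j), J k n ω) ≤ C j) :
    (∫ ω, (∑ k, ∑ n, r n * J k n ω) ∂μ) ≤ VCDLP ℓ Λ P C r := by
  classical
  set x : K → Finset N → ℝ := fun k S => (∫ ω, I k S ω ∂μ) / Λ k with hxdef
  have hEI : ∀ k S, 0 ≤ ∫ ω, I k S ω ∂μ :=
    fun k S => integral_nonneg (fun ω => hInn k S ω)
  have hΛx : ∀ k S, Λ k * x k S = ∫ ω, I k S ω ∂μ := by
    intro k S
    simp only [hxdef]
    rw [mul_div_assoc']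
    exact mul_div_cancel_left₀ _ (hΛ k).ne'
  -- key identity: Λ k * (column sum for product n) = E[J k n]
  have hcol : ∀ k n,
      Λ k * ∑ S ∈ univ.filter (fun S : Finset N => n ∈ S), x k S * P k n S
        = ∫ ω, J k n ω ∂μ := by
    intro k n
    rw [hb k n, integral_finset_sum _ (fun S _ => (hIint k S).mul_const _)]
    rw [Finset.mul_sum]
    refine Finset.sum_congr rfl fun S _ => ?_
    rw [← mul_assoc, hΛx, integral_mul_const]
  have hsum1 : ∀ k, ∑ S : Finset N, x k S = 1 := by
    intro k
    have h1 : ∑ S : Finset N, (∫ ω, I k S ω ∂μ) = Λ k := by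
      rw [← integral_finset_sum _ (fun S _ => hIint k S)]
      exact ha k
    simp only [hxdef]
    rw [← Finset.sum_div, h1, div_self (hΛ k).ne']
  have hfeas : CDLPFeasible ℓ Λ P C x := by
    refine ⟨fun k S => div_nonneg (hEI k S) (hΛ k).le, fun k => (hsum1 k).le, ?_⟩
    intro j
    have hEq : (∑ k, Λ k * ∑ n ∈ univ.filter (fun n => ℓ n = j),
        ∑ S ∈ univ.filter (fun S : Finset N => n ∈ S), x k S * P k n S)
        = ∫ ω, (∑ k, ∑ n ∈ univ.filter (fun n => ℓ n = j), J k n ω) ∂μ := by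
      rw [integral_finset_sum _ (fun k _ =>
        integrable_finset_sum _ (fun n _ => hJint k n))]
      refine Finset.sum_congr rfl fun k _ => ?_
      rw [integral_finset_sum _ (fun n _ => hJint k n), Finset.mul_sum]
      exact Finset.sum_congr rfl fun n _ => hcol k n
    rw [hEq]
    calc ∫ ω, (∑ k, ∑ n ∈ univ.filter (fun n => ℓ n = j), J k n ω) ∂μ
        ≤ ∫ _, C j ∂μ := by
          refine integral_mono_ae
            (integrable_finset_sum _ (fun k _ =>
              integrable_finset_sum _ (fun n _ => hJint k n)))
            (integrable_const _) ?_
          filter_upwards [hc] with ω h using h j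
      _ = C j := by simp
  -- the objective value equals the expected reward
  have hobj : CDLPObj Λ P r x = ∫ ω, (∑ k, ∑ n, r n * J k n ω) ∂μ := by
    rw [integral_finset_sum _ (fun k _ =>
      integrable_finset_sum _ (fun n _ => (hJint k n).const_mul _))]
    unfold CDLPObj
    refine Finset.sum_congr rfl fun k _ => ?_
    rw [integral_finset_sum _ (fun n _ => (hJint k n).const_mul _)]
    have : ∀ S : Finset N, Λ k * x k S * ∑ n ∈ S, P k n S * r n
        = ∑ n ∈ S, Λ k * (x k S * P k n S) * r n := by
      intro S
      rw [Finset.mul_sum]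
      refine Finset.sum_congr rfl fun n _ => ?_
      ring
    simp only [this]
    rw [sum_swap_mem (f := fun n S => Λ k * (x k S * P k n S) * r n)]
    refine Finset.sum_congr rfl fun n _ => ?_
    calc ∑ S ∈ univ.filter (fun S : Finset N => n ∈ S),
          Λ k * (x k S * P k n S) * r n
        = (Λ k * ∑ S ∈ univ.filter (fun S : Finset N => n ∈ S),
            x k S * P k n S) * r n := by
          rw [Finset.mul_sum, Finset.sum_mul]
      _ = (∫ ω, J k n ω ∂μ) * r n := by rw [hcol k n]
      _ = ∫ ω, r n * J k n ω ∂μ := by rw [mul_comm, ← integral_const_mul]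
  have hbdd : BddAbove (CDLPObj Λ P r '' {x | CDLPFeasible ℓ Λ P C x}) := by
    refine ⟨∑ k, Λ k * ∑ n, |r n|, ?_⟩
    rintro y ⟨x', hx', rfl⟩
    obtain ⟨hnn, hle, -⟩ := hx'
    unfold CDLPObj
    refine Finset.sum_le_sum fun k _ => ?_
    have hB : (0:ℝ) ≤ ∑ n, |r n| := Finset.sum_nonneg fun n _ => abs_nonneg _
    calc ∑ S : Finset N, Λ k * x' k S * ∑ n ∈ S, P k n S * r n
        ≤ ∑ S : Finset N, Λ k * x' k S * ∑ n, |r n| := by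
          refine Finset.sum_le_sum fun S _ => ?_
          refine mul_le_mul_of_nonneg_left ?_
            (mul_nonneg (hΛ k).le (hnn k S))
          calc ∑ n ∈ S, P k n S * r n
              ≤ ∑ n ∈ S, |r n| := by
                refine Finset.sum_le_sum fun n _ => ?_
                calc P k n S * r n ≤ |P k n S * r n| := le_abs_self _
                  _ = P k n S * |r n| := by
                      rw [abs_mul, abs_of_nonneg (hP0 k n S)]
                  _ ≤ 1 * |r n| :=
                      mul_le_mul_of_nonneg_right (hP1 k n S) (abs_nonneg _)
                  _ = |r n| := one_mul _
            _ ≤ ∑ n, |r n| :=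
                Finset.sum_le_sum_of_subset_of_nonneg (subset_univ S)
                  (fun n _ _ => abs_nonneg _)
      _ = Λ k * (∑ S : Finset N, x' k S) * ∑ n, |r n| := by
          rw [← Finset.sum_mul, ← Finset.mul_sum]
      _ ≤ Λ k * 1 * ∑ n, |r n| :=
          mul_le_mul_of_nonneg_right
            (mul_le_mul_of_nonneg_left (hle k) (hΛ k).le) hB
      _ = Λ k * ∑ n, |r n| := by rw [mul_one]
  rw [← hobj]
  exact le_csSup hbdd ⟨x, hfeas, rfl⟩
end

section
/- Let ε ≥ 0 and let π : L → ℝ and σ : K → ℝ be nonnegative vectors satisfying the relaxed dual feasibility condition Λ_k · ∑_{n ∈ S} (r_n − π(ℓ(n))) · P^k(n,S) ≤ (1 + ε) σ_k for every customer type k and every assortment S ⊆ N. Then ∑_{j ∈ L} C_j π_j + ∑_{k ∈ K} σ_k ≥ (1 − ε) · V^{CDLP}. -/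
open Finset

private lemma sum_mem_swap {N : Type*} [Fintype N] [DecidableEq N]
    (f : Finset N → N → ℝ) :
    ∑ S : Finset N, ∑ n ∈ S, f S n
      = ∑ n : N, ∑ S ∈ univ.filter (fun S : Finset N => n ∈ S), f S n := by
  rw [Finset.sum_comm']
  simp

/-- core of the paper's Theorem 2: nonnegative dual variables
satisfying the `(1+ε)`-relaxed dual feasibility condition have dual objective
value at least `(1-ε)` times the CDLP value. -/
theorem relaxed_dual_ge_VCDLP
    {K N L : Type*} [Fintype K] [Fintype N] [Fintype L]
    [DecidableEq N] [DecidableEq L]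
    (ℓ : N → L) (Λ : K → ℝ) (P : K → N → Finset N → ℝ) (C : L → ℝ) (r : N → ℝ)
    (hΛ : ∀ k, 0 ≤ Λ k) (hC : ∀ j, 0 ≤ C j)
    (hP0 : ∀ k n S, 0 ≤ P k n S) (hP1 : ∀ k n S, P k n S ≤ 1)
    (ε : ℝ) (hε : 0 ≤ ε)
    (π : L → ℝ) (σ : K → ℝ)
    (hπ : ∀ j, 0 ≤ π j) (hσ : ∀ k, 0 ≤ σ k)
    (hdual : ∀ k, ∀ S : Finset N,
      Λ k * ∑ n ∈ S, (r n - π (ℓ n)) * P k n S ≤ (1 + ε) * σ k) :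
    (1 - ε) * VCDLP ℓ Λ P C r ≤ ∑ j, C j * π j + ∑ k, σ k := by
    classical
  set D := ∑ j, C j * π j + ∑ k, σ k with hD
  have hCπ : 0 ≤ ∑ j, C j * π j :=
    Finset.sum_nonneg fun j _ => mul_nonneg (hC j) (hπ j)
  have hσs : 0 ≤ ∑ k, σ k := Finset.sum_nonneg fun k _ => hσ k
  set B := ∑ j, C j * π j + (1 + ε) * ∑ k, σ k with hB
  have hBnn : 0 ≤ B := by
    have : 0 ≤ (1 + ε) * ∑ k, σ k := mul_nonneg (by linarith) hσs
    linarith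
  -- key bound: every feasible objective value is at most B
  have hkey : ∀ x, CDLPFeasible ℓ Λ P C x → CDLPObj Λ P r x ≤ B := by
    intro x hx
    obtain ⟨hx0, hx1, hxC⟩ := hx
    have split : CDLPObj Λ P r x =
        (∑ k, ∑ S : Finset N,
          x k S * (Λ k * ∑ n ∈ S, (r n - π (ℓ n)) * P k n S))
      + (∑ k, ∑ S : Finset N, Λ k * (x k S * ∑ n ∈ S, π (ℓ n) * P k n S)) := by
      unfold CDLPObj
      rw [← Finset.sum_add_distrib]
      refine Finset.sum_congr rfl fun k _ => ?_
      rw [← Finset.sum_add_distrib]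
      refine Finset.sum_congr rfl fun S _ => ?_
      have h1 : ∑ n ∈ S, P k n S * r n
          = (∑ n ∈ S, (r n - π (ℓ n)) * P k n S) + ∑ n ∈ S, π (ℓ n) * P k n S := by
        rw [← Finset.sum_add_distrib]
        exact Finset.sum_congr rfl fun n _ => by ring
      rw [h1]; ring
    have term1 : (∑ k, ∑ S : Finset N,
          x k S * (Λ k * ∑ n ∈ S, (r n - π (ℓ n)) * P k n S))
        ≤ (1 + ε) * ∑ k, σ k := by
      rw [Finset.mul_sum]
      refine Finset.sum_le_sum fun k _ => ?_
      have step : ∀ S : Finset N,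
          x k S * (Λ k * ∑ n ∈ S, (r n - π (ℓ n)) * P k n S)
            ≤ x k S * ((1 + ε) * σ k) := fun S =>
        mul_le_mul_of_nonneg_left (hdual k S) (hx0 k S)
      calc ∑ S : Finset N, x k S * (Λ k * ∑ n ∈ S, (r n - π (ℓ n)) * P k n S)
          ≤ ∑ S : Finset N, x k S * ((1 + ε) * σ k) :=
            Finset.sum_le_sum fun S _ => step S
        _ = (∑ S : Finset N, x k S) * ((1 + ε) * σ k) := by
            rw [Finset.sum_mul]
        _ ≤ 1 * ((1 + ε) * σ k) := by
            refine mul_le_mul_of_nonneg_right (hx1 k) ?_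
            exact mul_nonneg (by linarith) (hσ k)
        _ = (1 + ε) * σ k := one_mul _
    have term2 : (∑ k, ∑ S : Finset N, Λ k * (x k S * ∑ n ∈ S, π (ℓ n) * P k n S))
        ≤ ∑ j, C j * π j := by
      have rearr : (∑ k, ∑ S : Finset N, Λ k * (x k S * ∑ n ∈ S, π (ℓ n) * P k n S))
          = ∑ j, π j * (∑ k, Λ k * ∑ n ∈ univ.filter (fun n => ℓ n = j),
              ∑ S ∈ univ.filter (fun S : Finset N => n ∈ S), x k S * P k n S) := by
        have hk : ∀ k, (∑ S : Finset N, Λ k * (x k S * ∑ n ∈ S, π (ℓ n) * P k n S))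
            = ∑ n : N, π (ℓ n) * (Λ k * ∑ S ∈ univ.filter (fun S : Finset N => n ∈ S),
                x k S * P k n S) := by
          intro k
          have h1 : (∑ S : Finset N, Λ k * (x k S * ∑ n ∈ S, π (ℓ n) * P k n S))
              = ∑ S : Finset N, ∑ n ∈ S, Λ k * x k S * (π (ℓ n) * P k n S) := by
            refine Finset.sum_congr rfl fun S _ => ?_
            rw [Finset.mul_sum, Finset.mul_sum]
            exact Finset.sum_congr rfl fun n _ => by ring
          rw [h1, sum_mem_swap]
          refine Finset.sum_congr rfl fun n _ => ?_
          rw [Finset.mul_sum, Finset.mul_sum]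
          exact Finset.sum_congr rfl fun S _ => by ring
        calc (∑ k, ∑ S : Finset N, Λ k * (x k S * ∑ n ∈ S, π (ℓ n) * P k n S))
            = ∑ k, ∑ n : N, π (ℓ n) * (Λ k * ∑ S ∈ univ.filter
                (fun S : Finset N => n ∈ S), x k S * P k n S) := by
              exact Finset.sum_congr rfl fun k _ => hk k
          _ = ∑ n : N, ∑ k, π (ℓ n) * (Λ k * ∑ S ∈ univ.filter
                (fun S : Finset N => n ∈ S), x k S * P k n S) := Finset.sum_comm
          _ = ∑ j, ∑ n ∈ univ.filter (fun n => ℓ n = j), ∑ k,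
                π (ℓ n) * (Λ k * ∑ S ∈ univ.filter
                (fun S : Finset N => n ∈ S), x k S * P k n S) :=
              (Finset.sum_fiberwise _ _ _).symm
          _ = ∑ j, π j * (∑ k, Λ k * ∑ n ∈ univ.filter (fun n => ℓ n = j),
                ∑ S ∈ univ.filter (fun S : Finset N => n ∈ S), x k S * P k n S) := by
              refine Finset.sum_congr rfl fun j _ => ?_
              rw [Finset.mul_sum, Finset.sum_comm]
              refine Finset.sum_congr rfl fun k _ => ?_
              rw [Finset.mul_sum, Finset.mul_sum]
              refine Finset.sum_congr rfl fun n hn => ?_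
              have : ℓ n = j := (Finset.mem_filter.mp hn).2
              rw [this]
      rw [rearr]
      calc (∑ j, π j * (∑ k, Λ k * ∑ n ∈ univ.filter (fun n => ℓ n = j),
              ∑ S ∈ univ.filter (fun S : Finset N => n ∈ S), x k S * P k n S))
          ≤ ∑ j, π j * C j :=
            Finset.sum_le_sum fun j _ => mul_le_mul_of_nonneg_left (hxC j) (hπ j)
        _ = ∑ j, C j * π j := Finset.sum_congr rfl fun j _ => mul_comm _ _
    rw [split, hB]
    linarith
  -- upper bound on VCDLP and nonnegativity
  have hub : B ∈ upperBounds (CDLPObj Λ P r '' {x | CDLPFeasible ℓ Λ P C x}) := by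
    rintro y ⟨x, hx, rfl⟩; exact hkey x hx
  have hV : VCDLP ℓ Λ P C r ≤ B :=
    Real.sSup_le (fun y hy => hub hy) hBnn
  have hzero : CDLPFeasible ℓ Λ P C (fun _ _ => (0 : ℝ)) := by
    refine ⟨fun _ _ => le_rfl, fun k => by simp, fun j => by simpa using hC j⟩
  have hmem : (0 : ℝ) ∈ CDLPObj Λ P r '' {x | CDLPFeasible ℓ Λ P C x} := by
    refine ⟨fun _ _ => 0, hzero, ?_⟩
    unfold CDLPObj; simp
  have hV0 : 0 ≤ VCDLP ℓ Λ P C r := le_csSup ⟨B, hub⟩ hmem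
  rcases le_or_gt ε 1 with h1 | h1
  · have h2 : (1 - ε) * VCDLP ℓ Λ P C r ≤ (1 - ε) * B :=
      mul_le_mul_of_nonneg_left hV (by linarith)
    have h3 : (1 - ε) * B ≤ D := by
      rw [hB, hD]
      nlinarith [mul_nonneg hε hσs, mul_nonneg hε hCπ, mul_nonneg (mul_nonneg hε hε) hσs]
    linarith
  · have h2 : (1 - ε) * VCDLP ℓ Λ P C r ≤ 0 :=
      mul_nonpos_of_nonpos_of_nonneg (by linarith) hV0
    have : 0 ≤ D := by rw [hD]; linarith
    linarith
end

section
/- For every real number x with 0 < x and every natural number C with x ≤ C, one has ∑_{d=0}^{C} e^{−x} · (x^d / d!) · d ≥ x / e, where the sum ranges over the integers d = 0, 1, …, C. -/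
/-!
Writing `d · x^d / d! = x · x^(d-1) / (d-1)!`, the sum equals `x · P(Poisson(x) ≤ C - 1)`, so it
suffices that `P(Poisson(t) ≤ n) ≥ 1/e` for `0 ≤ t ≤ n + 1`. The lower tail
`F_n(t) = P(Poisson(t) ≤ n)` has derivative `-e^{-t} t^n / n!`, so it is antitone in `t`, and it
suffices to treat `t = n + 1`. There `a_n = F_n(n + 1)` is nondecreasing in `n`: since
`e^{-t} t^(n+1)` is maximal at `t = n + 1`, the mean value theorem gives
`F_{n+1}(n + 2) ≥ F_{n+1}(n + 1) - e^{-(n+1)} (n+1)^(n+1) / (n+1)! = F_n(n + 1)`.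
Hence `a_n ≥ a_0 = 1/e`.
-/

open Finset Real Set Nat

/-- `P(Poisson(t) ≤ n)`. -/
noncomputable def poissonCDF (t : ℝ) (n : ℕ) : ℝ :=
  exp (-t) * ∑ k ∈ range (n + 1), t ^ k / k !

lemma hasDerivAt_sum_range_pow_div_factorial (n : ℕ) (t : ℝ) :
    HasDerivAt (fun s : ℝ => ∑ k ∈ range (n + 1), s ^ k / k !)
      (∑ k ∈ range n, t ^ k / k !) t := by
  induction n with
  | zero => simpa using hasDerivAt_const t (1 : ℝ)
  | succ n ih =>
    have hpow : HasDerivAt (fun s : ℝ => s ^ (n + 1) / (n + 1)!) (t ^ n / n !) t := by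
      refine ((hasDerivAt_pow (n + 1) t).div_const ((n + 1)! : ℝ)).congr_deriv ?_
      rw [Nat.factorial_succ]
      push_cast
      field_simp
    simpa only [sum_range_succ _ (n + 1), sum_range_succ _ n] using ih.fun_add hpow

lemma poissonCDF_succ (t : ℝ) (n : ℕ) :
    poissonCDF t (n + 1) = poissonCDF t n + exp (-t) * t ^ (n + 1) / (n + 1)! := by
  rw [poissonCDF, poissonCDF, sum_range_succ]
  ring

lemma hasDerivAt_poissonCDF (n : ℕ) (t : ℝ) :
    HasDerivAt (poissonCDF · n) (-(exp (-t) * t ^ n / n !)) t := by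
  have hexp : HasDerivAt (fun s : ℝ => exp (-s)) (-exp (-t)) t := by
    simpa using (hasDerivAt_neg t).exp
  exact (hexp.mul (hasDerivAt_sum_range_pow_div_factorial n t)).congr_deriv
    (by rw [sum_range_succ]; ring)

lemma antitoneOn_poissonCDF (n : ℕ) : AntitoneOn (poissonCDF · n) (Ici 0) := by
  refine antitoneOn_of_hasDerivWithinAt_nonpos (convex_Ici 0)
    (fun t _ => (hasDerivAt_poissonCDF n t).continuousAt.continuousWithinAt)
    (fun t _ => (hasDerivAt_poissonCDF n t).hasDerivWithinAt) fun t ht => ?_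
  rw [interior_Ici] at ht
  have ht0 : 0 ≤ t := le_of_lt ht
  have : 0 ≤ exp (-t) * t ^ n / n ! := by positivity
  linarith

lemma exp_neg_mul_pow_le (m : ℕ) {s : ℝ} (hs : 0 ≤ s) :
    exp (-s) * s ^ m ≤ exp (-m) * (m : ℝ) ^ m := by
  rcases Nat.eq_zero_or_pos m with rfl | hm
  · simpa using hs
  have hm : (0 : ℝ) < m := by exact_mod_cast hm
  have hratio : (s / m) ^ m ≤ exp (s - m) := by
    convert one_sub_div_pow_le_exp_neg (n := m) (t := m - s) (by linarith) using 2
    · field_simp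
      ring
    · ring
  calc exp (-s) * s ^ m = exp (-s) * (m : ℝ) ^ m * (s / m) ^ m := by
        rw [div_pow]
        field_simp
    _ ≤ exp (-s) * (m : ℝ) ^ m * exp (s - m) := by gcongr
    _ = exp (-m) * (m : ℝ) ^ m := by
        rw [mul_right_comm, ← exp_add]
        ring_nf

lemma poissonCDF_le_poissonCDF_succ (n : ℕ) :
    poissonCDF (n + 1 : ℕ) n ≤ poissonCDF (n + 2 : ℕ) (n + 1) := by
  set c : ℝ := exp (-((n + 1 : ℕ) : ℝ)) * ((n + 1 : ℕ) : ℝ) ^ (n + 1) / (n + 1)!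
  have hderiv (t : ℝ) (ht : t ∈ interior (Ici (0 : ℝ))) :
      -c ≤ deriv (poissonCDF · (n + 1)) t := by
    rw [(hasDerivAt_poissonCDF (n + 1) t).deriv, neg_le_neg_iff]
    rw [interior_Ici] at ht
    exact div_le_div_of_nonneg_right (exp_neg_mul_pow_le (n + 1) ht.out.le) (by positivity)
  have hslope := (convex_Ici (0 : ℝ)).mul_sub_le_image_sub_of_le_deriv
    (fun t _ => (hasDerivAt_poissonCDF (n + 1) t).continuousAt.continuousWithinAt)
    (fun t _ => (hasDerivAt_poissonCDF (n + 1) t).differentiableAt.differentiableWithinAt)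
    hderiv ((n + 1 : ℕ) : ℝ) (mem_Ici.mpr (Nat.cast_nonneg _)) ((n + 2 : ℕ) : ℝ)
    (mem_Ici.mpr (Nat.cast_nonneg _)) (by gcongr; omega)
  have hsucc : poissonCDF (n + 1 : ℕ) (n + 1) = poissonCDF (n + 1 : ℕ) n + c :=
    poissonCDF_succ _ n
  have hstep : ((n + 2 : ℕ) : ℝ) - ((n + 1 : ℕ) : ℝ) = 1 := by push_cast; ring
  rw [hsucc, hstep] at hslope
  linarith

lemma exp_neg_one_le_poissonCDF (n : ℕ) : exp (-1) ≤ poissonCDF (n + 1 : ℕ) n := by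
  induction n with
  | zero => simp [poissonCDF]
  | succ n ih => exact ih.trans (poissonCDF_le_poissonCDF_succ n)

lemma sum_range_succ_poisson_mul_self (x : ℝ) (n : ℕ) :
    ∑ d ∈ range (n + 2), exp (-x) * (x ^ d / d !) * d = x * poissonCDF x n := by
  rw [sum_range_succ', poissonCDF, mul_sum, mul_sum]
  simp only [Nat.cast_zero, mul_zero, add_zero]
  refine sum_congr rfl fun k _ => ?_
  rw [Nat.factorial_succ]
  push_cast
  field_simp
  ring

/-- for `0 < x ≤ C`,
`∑_{d=0}^{C} e^{-x} (x^d / d!) d ≥ x / e`. -/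
theorem poisson_truncated_first_moment_ge
    (x : ℝ) (C : ℕ) (hx : 0 < x) (hxC : x ≤ C) :
    x / Real.exp 1 ≤
      ∑ d ∈ Finset.range (C + 1),
        Real.exp (-x) * (x ^ d / Nat.factorial d) * d := by
  obtain ⟨n, rfl⟩ : ∃ n, C = n + 1 :=
    Nat.exists_eq_succ_of_ne_zero (by rintro rfl; norm_num at hxC; linarith)
  rw [sum_range_succ_poisson_mul_self, div_eq_mul_inv, ← exp_neg]
  have htail : exp (-1) ≤ poissonCDF x n :=
    (exp_neg_one_le_poissonCDF n).trans
      (antitoneOn_poissonCDF n hx.le (mem_Ici.mpr (Nat.cast_nonneg _)) hxC)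
  exact mul_le_mul_of_nonneg_left htail hx.le
end

section
/- Let r be a positive real number, let D be a Poisson random variable with rate r (i.e., P(D = d) = e^{−r} r^d / d! for d ∈ ℕ), and let C be a natural number with r ≤ C. Then E[min(D, C)] = ∑_{d=0}^{∞} P(D = d) · min(d, C) ≥ r / e. -/
/-!
The function `d ↦ C (1 - (1 - 1/C)^d)` lies below `min d C` (Bernoulli's inequality), and its
Poisson average is computed by the probability generating function `E[s^D] = exp (r (s - 1))`:
it equals `C (1 - exp (-r/C))`. Since `x ↦ 1 - exp (-x)` is concave, on `[0, 1]` it lies above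
its chord `x (1 - 1/e) ≥ x / e`, which for `x = r/C` gives `r / e`.
-/

open Real Set

lemma hasSum_poisson_mul_pow (r s : ℝ) :
    HasSum (fun d : ℕ => (exp (-r) * r ^ d / d.factorial) * s ^ d) (exp (r * (s - 1))) := by
  have h := (NormedSpace.expSeries_div_hasSum_exp (r * s)).mul_left (exp (-r))
  rw [← Real.exp_eq_exp_ℝ, ← exp_add, show -r + r * s = r * (s - 1) by ring] at h
  exact h.congr_fun fun d => by rw [mul_pow]; ring

lemma mul_one_sub_one_sub_inv_pow_le_min {c : ℝ} (hc : 1 ≤ c) (d : ℕ) :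
    c * (1 - (1 - c⁻¹) ^ d) ≤ min (d : ℝ) c := by
  have hq : 0 ≤ 1 - c⁻¹ := sub_nonneg.2 (inv_le_one_of_one_le₀ hc)
  have bernoulli : 1 + d * -c⁻¹ ≤ (1 - c⁻¹) ^ d :=
    sub_eq_add_neg (1 : ℝ) c⁻¹ ▸ one_add_mul_le_pow (by linarith [inv_le_one_of_one_le₀ hc]) d
  refine le_min ?_ (mul_le_of_le_one_right (by linarith) (by linarith [pow_nonneg hq d]))
  calc c * (1 - (1 - c⁻¹) ^ d) ≤ c * (d * c⁻¹) := by gcongr; linarith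
    _ = d := by field_simp

lemma mul_one_sub_exp_neg_div_le_tsum_poisson_mul_min {r c : ℝ} (hr : 0 ≤ r) (hc : 1 ≤ c) :
    c * (1 - exp (-(r / c))) ≤ ∑' d : ℕ, (exp (-r) * r ^ d / d.factorial) * min (d : ℝ) c := by
  have hp (d : ℕ) : 0 ≤ exp (-r) * r ^ d / d.factorial := by positivity
  have lower : HasSum (fun d : ℕ => (exp (-r) * r ^ d / d.factorial) * (c * (1 - (1 - c⁻¹) ^ d)))
      (c * (1 - exp (-(r / c)))) := by
    have h := ((hasSum_poisson_mul_pow r 1).sub (hasSum_poisson_mul_pow r (1 - c⁻¹))).mul_left c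
    rw [sub_self, mul_zero, exp_zero, show r * (1 - c⁻¹ - 1) = -(r / c) by ring] at h
    exact h.congr_fun fun d => by ring
  have summable : Summable (fun d : ℕ => (exp (-r) * r ^ d / d.factorial) * min (d : ℝ) c) := by
    refine Summable.of_nonneg_of_le
      (fun d => mul_nonneg (hp d) (le_min d.cast_nonneg (by linarith)))
      (fun d => mul_le_mul_of_nonneg_left (min_le_right _ _) (hp d)) ?_
    simpa using ((hasSum_poisson_mul_pow r 1).summable.mul_right c)
  exact hasSum_le (fun d => mul_le_mul_of_nonneg_left (mul_one_sub_one_sub_inv_pow_le_min hc d)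
    (hp d)) lower summable.hasSum

lemma div_exp_one_le_one_sub_exp_neg {x : ℝ} (hx₀ : 0 ≤ x) (hx₁ : x ≤ 1) :
    x / exp 1 ≤ 1 - exp (-x) := by
  have chord : exp (-x) ≤ (1 - x) + x * exp (-1) := by
    simpa [smul_eq_mul] using
      convexOn_exp.2 (mem_univ 0) (mem_univ (-1)) (sub_nonneg.2 hx₁) hx₀ (by ring)
  have two_mul_exp_neg_one : 2 * exp (-1) ≤ 1 := by
    rw [exp_neg, ← div_eq_mul_inv, div_le_one (exp_pos 1)]
    exact exp_one_gt_two.le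
  rw [div_eq_mul_inv, ← exp_neg]
  nlinarith

/-- if `D` is Poisson with rate `r ≤ C`, then
`E[min(D, C)] ≥ r / e`. -/
theorem poisson_min_capacity_expectation_ge
    (r : ℝ) (C : ℕ) (hr : 0 < r) (hrC : r ≤ C) :
    r / Real.exp 1 ≤
      ∑' d : ℕ, (Real.exp (-r) * r ^ d / Nat.factorial d) * min (d : ℝ) C := by
  have hC : (1 : ℝ) ≤ C := Nat.one_le_cast.2 (Nat.cast_pos.1 (hr.trans_le hrC))
  calc r / exp 1 = C * (r / C / exp 1) := by field_simp
    _ ≤ C * (1 - exp (-(r / C))) := by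
      gcongr
      exact div_exp_one_le_one_sub_exp_neg (by positivity) ((div_le_one (by linarith)).2 hrC)
    _ ≤ _ := mul_one_sub_exp_neg_div_le_tsum_poisson_mul_min hr.le hC
end

section
/- Let f, g, Λ : ℝ → ℝ be functions such that for every t ∈ [0,1], f has derivative g(t) at t (as a function on ℝ), g(t) ≤ Λ(t) · f(t), and Λ(t) ≥ 0. If f(1) = 0, then f(t) ≥ 0 for every t ∈ [0,1]. -/
/-- backward Grönwall-type comparison: if `f` has derivative
`g t` at every `t ∈ [0,1]`, `g t ≤ Λ t * f t` with `Λ t ≥ 0` on `[0,1]`, and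
`f 1 = 0`, then `f ≥ 0` on `[0,1]`. -/
theorem backward_gronwall_nonneg
    (f g Λ : ℝ → ℝ)
    (hderiv : ∀ t ∈ Set.Icc (0:ℝ) 1, HasDerivAt f (g t) t)
    (hg : ∀ t ∈ Set.Icc (0:ℝ) 1, g t ≤ Λ t * f t)
    (hΛ : ∀ t ∈ Set.Icc (0:ℝ) 1, 0 ≤ Λ t)
    (hf1 : f 1 = 0) :
    ∀ t ∈ Set.Icc (0:ℝ) 1, 0 ≤ f t := by
  intro t₀ ht₀
  by_contra hneg
  push_neg at hneg
  have hcont : ContinuousOn f (Set.Icc (0:ℝ) 1) := fun x hx =>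
    (hderiv x hx).continuousAt.continuousWithinAt
  -- the set where f ≤ f t₀, within [t₀, 1]
  set C : Set ℝ := Set.Icc t₀ 1 ∩ f ⁻¹' Set.Iic (f t₀) with hC
  have hsub : Set.Icc t₀ 1 ⊆ Set.Icc (0:ℝ) 1 :=
    Set.Icc_subset_Icc ht₀.1 le_rfl
  have hCclosed : IsClosed C :=
    (hcont.mono hsub).preimage_isClosed_of_isClosed isClosed_Icc isClosed_Iic
  have hCne : C.Nonempty := ⟨t₀, ⟨le_rfl, ht₀.2⟩, show f t₀ ≤ f t₀ from le_rfl⟩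
  have hCbdd : BddAbove C := ⟨1, fun x hx => hx.1.2⟩
  set T := sSup C with hT
  have hTC : T ∈ C := hCclosed.csSup_mem hCne hCbdd
  have hT01 : T ∈ Set.Icc (0:ℝ) 1 := hsub hTC.1
  have hfT : f T ≤ f t₀ := hTC.2
  have hT1 : T < 1 := by
    rcases lt_or_eq_of_le hT01.2 with h | h
    · exact h
    · exfalso; rw [h, hf1] at hfT; linarith [hneg]
  -- continuity: f < 0 near T
  have hfTneg : f T < 0 := lt_of_le_of_lt hfT hneg
  have hca : ContinuousAt f T := (hderiv T hT01).continuousAt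
  obtain ⟨δ, hδpos, hδ⟩ := Metric.continuousAt_iff.mp hca (-(f T)) (by linarith)
  set ε := min (δ / 2) (1 - T) with hε
  have hεpos : 0 < ε := lt_min (by linarith) (by linarith)
  have hεδ : ε < δ := lt_of_le_of_lt (min_le_left _ _) (by linarith)
  have hIcc : Set.Icc T (T + ε) ⊆ Set.Icc (0:ℝ) 1 := by
    intro x hx
    constructor
    · linarith [hT01.1, hx.1]
    · have : ε ≤ 1 - T := min_le_right _ _
      linarith [hx.2]
  have hnegOn : ∀ x ∈ Set.Icc T (T + ε), f x < 0 := by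
    intro x hx
    have : dist x T < δ := by
      rw [Real.dist_eq, abs_lt]
      constructor <;> [linarith [hx.1]; linarith [hx.2]]
    have := hδ this
    rw [Real.dist_eq, abs_lt] at this
    linarith [this.2]
  have hanti : AntitoneOn f (Set.Icc T (T + ε)) := by
    apply antitoneOn_of_deriv_nonpos (convex_Icc _ _)
      (hcont.mono hIcc)
    · intro x hx
      rw [interior_Icc] at hx
      exact (hderiv x (hIcc ⟨hx.1.le, hx.2.le⟩)).differentiableAt.differentiableWithinAt
    · intro x hx
      rw [interior_Icc] at hx
      have hx01 : x ∈ Set.Icc (0:ℝ) 1 := hIcc ⟨hx.1.le, hx.2.le⟩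
      rw [(hderiv x hx01).deriv]
      have h1 := hg x hx01
      have h2 := hΛ x hx01
      have h3 := hnegOn x ⟨hx.1.le, hx.2.le⟩
      nlinarith
  have hmem : T + ε ∈ C := by
    refine ⟨⟨by linarith [hTC.1.1], by linarith [min_le_right (δ/2) (1-T)]⟩, ?_⟩
    have := hanti (Set.left_mem_Icc.mpr (by linarith))
      (Set.right_mem_Icc.mpr (by linarith)) (by linarith)
    exact le_trans this hfT
  have := le_csSup hCbdd hmem
  linarith
end
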